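/- Let $E_1 \subseteq Gr(n, m_1)$ and $E_2 \subseteq Gr(n, m_2)$ be non-degenerate sets with $m_1 + m_2 < n$, and set $E = \{W_1 + W_2 : W_i \in E_i, W_1 \cap W_2 = 0\}$. Then $|E|^n \geq \max\{|E_1|, |E_2|\}$. -/

import Mathlib

/-!
Fix `W₁ ∈ E₁` and a vector `x ∉ W₁`. Extending `W₁ + ⟨x⟩` to a subspace `V` of dimension `n - m₂`,
non-degeneracy of `E₂` gives `W₂ ∈ E₂` with `W₂ ∩ V = 0`; then `W₁ ∩ W₂ = 0` and, by the modular
law, `(W₁ + W₂) ∩ V = W₁`, so `x ∉ W₁ + W₂ ∈ E`. Hence `W₁` is the intersection of the members of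
`E` containing it, and since each new member can be chosen to cut the current intersection down
strictly, at most `n` of them suffice. So `W₁ ↦ (U₁, …, Uₙ)` with `⋂ Uᵢ = W₁` injects `E₁` into
`Eⁿ`, and symmetrically for `E₂`.
-/

open Module Submodule

section Grassmannian

variable {K V : Type*} [Field K] [AddCommGroup V] [Module K V]

def IsNondegenerate (m : ℕ) (E : Set (Submodule K V)) : Prop :=
  ∀ U : Submodule K V, finrank K U = finrank K V - m → ∃ W ∈ E, W ⊓ U = ⊥

variable [FiniteDimensional K V]

theorem Submodule.exists_le_finrank_eq (W : Submodule K V) {k : ℕ} (hWk : finrank K W ≤ k)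
    (hk : k ≤ finrank K V) : ∃ U : Submodule K V, W ≤ U ∧ finrank K U = k := by
  induction k, hWk using Nat.le_induction with
  | base => exact ⟨W, le_rfl, rfl⟩
  | succ k _ ih =>
    obtain ⟨U, hWU, hUk⟩ := ih (by omega)
    obtain ⟨x, -, hx⟩ : ∃ x ∈ (⊤ : Submodule K V), x ∉ U :=
      SetLike.exists_of_lt (lt_top_iff_ne_top.2 fun h => by
        rw [h, finrank_top] at hUk; omega)
    exact ⟨U ⊔ K ∙ x, hWU.trans le_sup_left, by rw [finrank_sup_span_singleton hx, hUk]⟩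

theorem IsNondegenerate.exists_inf_eq_bot_notMem_sup {b : ℕ} {B : Set (Submodule K V)}
    (hB : IsNondegenerate b B) {W : Submodule K V} (hW : finrank K W + b < finrank K V) {x : V}
    (hx : x ∉ W) : ∃ W₂ ∈ B, W ⊓ W₂ = ⊥ ∧ x ∉ W ⊔ W₂ := by
  have hWx : finrank K ↥(W ⊔ K ∙ x) ≤ finrank K V - b := by
    rw [finrank_sup_span_singleton hx]; omega
  obtain ⟨U, hWxU, hU⟩ := (W ⊔ K ∙ x).exists_le_finrank_eq hWx (Nat.sub_le _ _)
  obtain ⟨W₂, hW₂B, hW₂U⟩ := hB U hU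
  have hWU : W ≤ U := le_sup_left.trans hWxU
  have hxU : x ∈ U := hWxU (mem_sup_right (mem_span_singleton_self x))
  have hsupU : (W ⊔ W₂) ⊓ U = W := by
    rw [sup_inf_assoc_of_le W₂ hWU, hW₂U, sup_bot_eq]
  refine ⟨W₂, hW₂B, eq_bot_iff.2 ?_, fun hxW₂ => hx (hsupU ▸ ⟨hxW₂, hxU⟩)⟩
  calc W ⊓ W₂ ≤ W₂ ⊓ U := le_inf inf_le_right (inf_le_left.trans hWU)
    _ = ⊥ := hW₂U

theorem Fin.iInf_cons {α : Type*} [CompleteLattice α] {m : ℕ} (a : α) (g : Fin m → α) :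
    ⨅ i, (Fin.cons a g : Fin (m + 1) → α) i = a ⊓ ⨅ i, g i :=
  le_antisymm (le_inf (iInf_le_of_le 0 le_rfl) (le_iInf fun i => iInf_le_of_le i.succ le_rfl))
    (le_iInf <| Fin.cases inf_le_left fun i => inf_le_right.trans (iInf_le _ i))

theorem exists_fin_iInf_eq {S : Set (Submodule K V)} {W : Submodule K V}
    (hWS : ∀ U ∈ S, W ≤ U) (hsep : ∀ x ∉ W, ∃ U ∈ S, x ∉ U) (hS : S.Nonempty) {m : ℕ}
    (hm : finrank K V ≤ finrank K W + m) :
    ∃ g : Fin m → Submodule K V, (∀ i, g i ∈ S) ∧ ⨅ i, g i = W := by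
  have hle {k : ℕ} (g : Fin k → Submodule K V) (hg : ∀ i, g i ∈ S) : W ≤ ⨅ i, g i :=
    le_iInf fun i => hWS _ (hg i)
  suffices h : ∃ g : Fin m → Submodule K V, (∀ i, g i ∈ S) ∧
      (⨅ i, g i = W ∨ finrank K ↥(⨅ i, g i) + m ≤ finrank K V) by
    obtain ⟨g, hgS, hg | hg⟩ := h
    · exact ⟨g, hgS, hg⟩
    · exact ⟨g, hgS, (eq_of_le_of_finrank_le (hle g hgS) (by omega)).symm⟩
  clear hm
  induction m with
  | zero => exact ⟨Fin.elim0, fun i => i.elim0, Or.inr (finrank_le _)⟩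
  | succ m ih =>
    obtain ⟨g, hgS, hg⟩ := ih
    have hcons {U} (hU : U ∈ S) : ∀ i, (Fin.cons U g : Fin (m + 1) → _) i ∈ S :=
      Fin.cases hU hgS
    by_cases hgW : ⨅ i, g i = W
    · obtain ⟨U, hU⟩ := hS
      exact ⟨_, hcons hU, Or.inl (by rw [Fin.iInf_cons, hgW, inf_eq_right.2 (hWS U hU)])⟩
    obtain ⟨x, hxg, hxW⟩ := SetLike.exists_of_lt (lt_of_le_of_ne (hle g hgS) (Ne.symm hgW))
    obtain ⟨U, hU, hxU⟩ := hsep x hxW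
    have hlt : U ⊓ ⨅ i, g i < ⨅ i, g i :=
      lt_of_le_of_ne inf_le_right fun h => hxU (h.ge hxg).1
    refine ⟨_, hcons hU, Or.inr ?_⟩
    rw [Fin.iInf_cons]
    have := finrank_lt_finrank_of_lt hlt
    have := hg.resolve_left hgW
    omega

end Grassmannian

theorem Set.ncard_le_ncard_pow_of_forall_eq_iInf {α : Type*} [CompleteLattice α] {n : ℕ}
    {A E : Set α} (hE : E.Finite) (hA : ∀ a ∈ A, ∃ g : Fin n → α, (∀ i, g i ∈ E) ∧ ⨅ i, g i = a) :
    A.ncard ≤ E.ncard ^ n := by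
  have := hE.to_subtype
  have hAsub : A ⊆ range fun g : Fin n → E => ⨅ i, (g i : α) := fun a ha => by
    obtain ⟨g, hgE, rfl⟩ := hA a ha
    exact ⟨fun i => ⟨g i, hgE i⟩, rfl⟩
  calc A.ncard ≤ (range fun g : Fin n → E => ⨅ i, (g i : α)).ncard :=
        ncard_le_ncard hAsub (finite_range _)
    _ ≤ Nat.card (Fin n → E) := Finite.card_range_le _
    _ = E.ncard ^ n := by rw [Nat.card_fun, Nat.card_fin, Nat.card_coe_set_eq]

theorem ncard_le_ncard_pow_finrank {K V : Type*} [Field K] [AddCommGroup V] [Module K V]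
    [FiniteDimensional K V] {b : ℕ} {A B E : Set (Submodule K V)}
    (hA : ∀ W ∈ A, finrank K W + b < finrank K V) (hB : IsNondegenerate b B) (hE : E.Finite)
    (hAB : ∀ W₁ ∈ A, ∀ W₂ ∈ B, W₁ ⊓ W₂ = ⊥ → W₁ ⊔ W₂ ∈ E) :
    A.ncard ≤ E.ncard ^ finrank K V := by
  refine Set.ncard_le_ncard_pow_of_forall_eq_iInf hE fun W hW => ?_
  have hsep (x) (hx : x ∉ W) : ∃ U ∈ {U | U ∈ E ∧ W ≤ U}, x ∉ U := by
    obtain ⟨W₂, hW₂B, hWW₂, hxW₂⟩ := hB.exists_inf_eq_bot_notMem_sup (hA W hW) hx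
    exact ⟨W ⊔ W₂, ⟨hAB W hW W₂ hW₂B hWW₂, le_sup_left⟩, hxW₂⟩
  obtain ⟨x, -, hx⟩ : ∃ x ∈ (⊤ : Submodule K V), x ∉ W :=
    SetLike.exists_of_lt (lt_top_iff_ne_top.2 fun h => by
      have := hA W hW; rw [h, finrank_top] at this; omega)
  obtain ⟨U, hU, -⟩ := hsep x hx
  obtain ⟨g, hgS, hgW⟩ := exists_fin_iInf_eq (fun U hU => hU.2) hsep ⟨U, hU⟩ (Nat.le_add_left _ _)
  exact ⟨g, fun i => (hgS i).1, hgW⟩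

theorem stmt5 (p n m₁ m₂ : ℕ) (hp : p.Prime) (hmn : m₁ + m₂ < n)
    (E₁ E₂ : Set (Submodule (ZMod p) (Fin n → ZMod p)))
    (hE₁dim : ∀ W ∈ E₁, Module.finrank (ZMod p) W = m₁)
    (hE₂dim : ∀ W ∈ E₂, Module.finrank (ZMod p) W = m₂)
    (hE₁nd : ∀ V : Submodule (ZMod p) (Fin n → ZMod p),
      Module.finrank (ZMod p) V = n - m₁ → ∃ W ∈ E₁, W ⊓ V = ⊥)
    (hE₂nd : ∀ V : Submodule (ZMod p) (Fin n → ZMod p),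
      Module.finrank (ZMod p) V = n - m₂ → ∃ W ∈ E₂, W ⊓ V = ⊥) :
    max E₁.ncard E₂.ncard ≤
      ({U : Submodule (ZMod p) (Fin n → ZMod p) |
        ∃ W₁ ∈ E₁, ∃ W₂ ∈ E₂, W₁ ⊓ W₂ = ⊥ ∧ U = W₁ ⊔ W₂}.ncard) ^ n := by
  have : Fact p.Prime := ⟨hp⟩
  have hn : finrank (ZMod p) (Fin n → ZMod p) = n := finrank_fin_fun _
  refine max_le (le_of_le_of_eq ?_ (congrArg (_ ^ ·) hn))
    (le_of_le_of_eq ?_ (congrArg (_ ^ ·) hn))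
  · exact ncard_le_ncard_pow_finrank (b := m₂) (fun W hW => by rw [hE₁dim W hW, hn]; omega)
      (fun U hU => hE₂nd U (hU.trans (by rw [hn]))) (Set.toFinite _) fun W₁ h₁ W₂ h₂ h =>
        ⟨W₁, h₁, W₂, h₂, h, rfl⟩
  · exact ncard_le_ncard_pow_finrank (b := m₁) (fun W hW => by rw [hE₂dim W hW, hn]; omega)
      (fun U hU => hE₁nd U (hU.trans (by rw [hn]))) (Set.toFinite _) fun W₂ h₂ W₁ h₁ h =>
        ⟨W₁, h₁, W₂, h₂, inf_comm W₁ W₂ ▸ h, sup_comm W₂ W₁⟩
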